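/- arXiv:2101.02994 — 9 statements merged into one kernel-verified Lean document; each statement's English description precedes it below -/
import Mathlib

section
/- If an S_Σ-algebra (QW, qwintro) satisfying a system of equations ε is initial among such algebras (i.e., has qwrec, qwrechom, qwuniq), then for any motive P : QW → 𝓤, induction step p, and a proof that p respects the equations of ε (via the dependent lift operation), there exists a dependent eliminator qwelim : ∏_{x : QW} P x satisfying the computation rule qwelim (qwintro (a, b)) = p a b (qwelim ∘ b). -/
universe u

/-- A signature `Σ = (A, B)` with operations `A` and arities `B`. -/
structure Sig : Type (u + 1) where
  A : Type u
  B : A → Type u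

/-- The polynomial endofunctor `S_Σ(X) = Σ_{a:A} (B a → X)`. -/
def SPoly (S : Sig.{u}) (X : Type u) : Type u := Σ a : S.A, S.B a → X

/-- Free `S_Σ`-algebra (terms) on variables `V`. -/
inductive Tm (S : Sig.{u}) (V : Type u) : Type u
  | η : V → Tm S V
  | σ : (a : S.A) → (S.B a → Tm S V) → Tm S V

/-- Bind `t ⋙ ρ` extending `ρ : V → X` along an algebra `α`. -/
def Tm.bind {S : Sig.{u}} {V X : Type u} (α : SPoly S X → X) (ρ : V → X) :
    Tm S V → X
  | .η v => ρ v
  | .σ a b => α ⟨a, fun x => (b x).bind α ρ⟩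

/-- A system of equations over a signature. -/
structure EqSys (S : Sig.{u}) : Type (u + 1) where
  E : Type u
  V : E → Type u
  l : (e : E) → Tm S (V e)
  r : (e : E) → Tm S (V e)

/-- An algebra `α` satisfies the system of equations `ε`. -/
def Sat {S : Sig.{u}} (ε : EqSys S) {X : Type u} (α : SPoly S X → X) : Prop :=
  ∀ (e : ε.E) (ρ : ε.V e → X), (ε.l e).bind α ρ = (ε.r e).bind α ρ

/-- A QW-type: an `S_Σ`-algebra satisfying `ε`, initial among such algebras. -/
structure QWType (S : Sig.{u}) (ε : EqSys S) : Type (u + 1) where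
  QW : Type u
  intro : SPoly S QW → QW
  equate : Sat ε intro
  qwrec : ∀ (X : Type u) (α : SPoly S X → X), Sat ε α → QW → X
  qwrechom : ∀ (X : Type u) (α : SPoly S X → X) (p : Sat ε α) (s : SPoly S QW),
    qwrec X α p (intro s) = α ⟨s.1, fun x => qwrec X α p (s.2 x)⟩
  qwuniq : ∀ (X : Type u) (α : SPoly S X → X) (p : Sat ε α) (f : QW → X),
    (∀ s : SPoly S QW, f (intro s) = α ⟨s.1, fun x => f (s.2 x)⟩) →
    qwrec X α p = f

/-- The dependent lift of an induction step `p` along a substitution `ρ`. -/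
def liftD {S : Sig.{u}} {QW : Type u} (intro : SPoly S QW → QW) (P : QW → Type u)
    (p : ∀ (a : S.A) (b : S.B a → QW), (∀ x, P (b x)) → P (intro ⟨a, b⟩))
    {X : Type u} (ρ : X → Σ x, P x) :
    (t : Tm S X) → P (t.bind intro (fun x => (ρ x).1))
  | .η x => (ρ x).2
  | .σ a b => p a (fun x => (b x).bind intro (fun y => (ρ y).1))
      (fun x => liftD intro P p ρ (b x))

section Work
variable (S : Sig.{u}) (ε : EqSys S) (Q : QWType S ε)
    (P : Q.QW → Type u)
    (p : ∀ (a : S.A) (b : S.B a → Q.QW), (∀ x, P (b x)) → P (Q.intro ⟨a, b⟩))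

/-- total algebra -/
def tot : SPoly S (Σ x, P x) → Σ x, P x :=
  fun s => ⟨Q.intro ⟨s.1, fun x => (s.2 x).1⟩, p s.1 _ (fun x => (s.2 x).2)⟩

theorem heq_p {a : S.A} {b1 b2 : S.B a → Q.QW} (hb : b1 = b2)
    {h1 : ∀ x, P (b1 x)} {h2 : ∀ x, P (b2 x)} (hh : ∀ x, HEq (h1 x) (h2 x)) :
    HEq (p a b1 h1) (p a b2 h2) := by
  subst hb
  have : h1 = h2 := funext fun x => eq_of_heq (hh x)
  subst this; rfl

theorem fst_bind {X : Type u} (ρ : X → Σ x, P x) (t : Tm S X) :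
    (t.bind (tot S ε Q P p) ρ).1 = t.bind Q.intro (fun x => (ρ x).1) := by
  induction t with
  | η x => rfl
  | σ a b ih =>
    show Q.intro ⟨a, fun x => ((b x).bind (tot S ε Q P p) ρ).1⟩ = _
    simp only [Tm.bind]
    congr 1
    exact congrArg _ (funext ih)

theorem snd_bind {X : Type u} (ρ : X → Σ x, P x) (t : Tm S X) :
    HEq (t.bind (tot S ε Q P p) ρ).2 (liftD Q.intro P p ρ t) := by
  induction t with
  | η x => rfl
  | σ a b ih =>
    show HEq (p a (fun x => ((b x).bind (tot S ε Q P p) ρ).1)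
        (fun x => ((b x).bind (tot S ε Q P p) ρ).2)) _
    exact heq_p S ε Q P p (funext fun x => fst_bind S ε Q P p ρ (b x)) ih

theorem sat_tot (presp : ∀ (e : ε.E) (ρ : ε.V e → Σ x, P x),
      HEq (liftD Q.intro P p ρ (ε.l e)) (liftD Q.intro P p ρ (ε.r e))) :
    Sat ε (tot S ε Q P p) := by
  intro e ρ
  have h1 := fst_bind S ε Q P p ρ (ε.l e)
  have h2 := fst_bind S ε Q P p ρ (ε.r e)
  have hfst : ((ε.l e).bind (tot S ε Q P p) ρ).1 = ((ε.r e).bind (tot S ε Q P p) ρ).1 := by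
    rw [h1, h2, Q.equate e]
  have hsnd : HEq ((ε.l e).bind (tot S ε Q P p) ρ).2 ((ε.r e).bind (tot S ε Q P p) ρ).2 :=
    (snd_bind S ε Q P p ρ (ε.l e)).trans ((presp e ρ).trans (snd_bind S ε Q P p ρ (ε.r e)).symm)
  exact Sigma.ext hfst hsnd

end Work


/-- an initial algebra for `(Σ, ε)` admits a dependent eliminator
with the expected computation rule, given an induction step respecting the
equations (via the dependent lift, up to heterogeneous equality). -/
theorem qw_dependent_elimination (S : Sig.{u}) (ε : EqSys S) (Q : QWType S ε)
    (P : Q.QW → Type u)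
    (p : ∀ (a : S.A) (b : S.B a → Q.QW), (∀ x, P (b x)) → P (Q.intro ⟨a, b⟩))
    (presp : ∀ (e : ε.E) (ρ : ε.V e → Σ x, P x),
      HEq (liftD Q.intro P p ρ (ε.l e)) (liftD Q.intro P p ρ (ε.r e))) :
    ∃ qwelim : ∀ x, P x, ∀ (a : S.A) (b : S.B a → Q.QW),
      qwelim (Q.intro ⟨a, b⟩) = p a b (fun x => qwelim (b x)) := by

  have sat := sat_tot S ε Q P p presp
  set f := Q.qwrec (Σ x, P x) (tot S ε Q P p) sat with hf
  have fhom : ∀ s : SPoly S Q.QW, f (Q.intro s) = tot S ε Q P p ⟨s.1, fun x => f (s.2 x)⟩ :=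
    Q.qwrechom _ _ sat
  have hid : (fun x => (f x).1) = id := by
    have h1 := Q.qwuniq Q.QW Q.intro Q.equate (fun x => (f x).1) (by
      intro s
      show (f (Q.intro s)).1 = Q.intro ⟨s.1, fun x => (f (s.2 x)).1⟩
      rw [fhom s]; rfl)
    have h2 := Q.qwuniq Q.QW Q.intro Q.equate id (fun s => rfl)
    rw [← h1, h2]
  have hpt : ∀ x, (f x).1 = x := fun x => congrFun hid x
  refine ⟨fun x => (hpt x) ▸ (f x).2, ?_⟩
  intro a b
  have key : ∀ {a b : Q.QW} (h : a = b) (v : P a), HEq (h ▸ v) v := by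
    intro a b h v; cases h; rfl
  apply eq_of_heq
  refine ((key (hpt (Q.intro ⟨a, b⟩)) _).trans ?_)
  rw [fhom ⟨a, b⟩]
  show HEq (p a (fun x => (f (b x)).1) (fun x => (f (b x)).2)) _
  exact heq_p S ε Q P p (funext fun x => hpt (b x))
    (fun x => (key (hpt (b x)) _).symm)
end

section
/- If initial algebras (QW-types) exist for all signatures and systems of equations in a universe 𝓤, then free algebras exist: for every signature Σ, system of equations ε, and type X : 𝓤, there is a (Σ,ε)-algebra F X with a map η_X : X → F X that is universal among maps from X into (Σ,ε)-algebras. Concretely, F X can be obtained as the QW-type for the modified signature Σ_X = (X + A, B_X) with B_X(ι₁ x) = 𝟘 and B_X(ι₂ a) = B a, and equations ε_X = (E, V, l_X, r_X) with l_X e = l e ⋙ η and r_X e = r e ⋙ η. -/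
universe u

/-- `(F, α, ηX)` is the free `(Σ,ε)`-algebra on `X`: an `S_Σ`-algebra
satisfying `ε` with an inclusion of generators universal among maps from `X`
into `(Σ,ε)`-algebras. -/
def IsFreeAlg (S : Sig.{u}) (ε : EqSys S) (X : Type u) (F : Type u)
    (α : SPoly S F → F) (ηX : X → F) : Prop :=
  Sat ε α ∧
  ∀ (Y : Type u) (β : SPoly S Y → Y), Sat ε β → ∀ g : X → Y,
    ∃! h : F → Y,
      (∀ s : SPoly S F, h (α s) = β ⟨s.1, fun x => h (s.2 x)⟩) ∧
      (∀ x, h (ηX x) = g x)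

/-- The modified signature `Σ_X = (X + A, B_X)` with `B_X(ι₁ x) = 𝟘` and
`B_X(ι₂ a) = B a`. -/
def sigX (S : Sig.{u}) (X : Type u) : Sig.{u} where
  A := X ⊕ S.A
  B := fun a => match a with
    | .inl _ => PEmpty
    | .inr a => S.B a

/-- The modified system of equations `ε_X = (E, V, l ⋙ η, r ⋙ η)`, using the
`S_Σ`-algebra structure `s(a,b) = σ(ι₂ a, b)` on `T_{Σ_X}(V e)`. -/
def eqsX (S : Sig.{u}) (ε : EqSys S) (X : Type u) : EqSys (sigX S X) where
  E := ε.E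
  V := ε.V
  l := fun e => (ε.l e).bind (fun s => Tm.σ (Sum.inr s.1) s.2) Tm.η
  r := fun e => (ε.r e).bind (fun s => Tm.σ (Sum.inr s.1) s.2) Tm.η

/-- Binding the embedded term equals binding the original term along the
restricted algebra. -/
theorem bind_embed {S : Sig.{u}} {X : Type u} {V Y : Type u}
    (β' : SPoly (sigX S X) Y → Y) (ρ : V → Y) (t : Tm S V) :
    (t.bind (fun s => Tm.σ (Sum.inr s.1) s.2) Tm.η).bind β' ρ
      = t.bind (fun s => β' ⟨Sum.inr s.1, s.2⟩) ρ := by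
  induction t with
  | η v => rfl
  | σ a b ih =>
    simp only [Tm.bind]
    congr 1
    exact congrArg (fun f => Sigma.mk (β := fun a => (sigX S X).B a → Y)
      (Sum.inr a) f) (funext ih)

/-- if QW-types exist for all signatures and systems of
equations, then free algebras exist; concretely, the QW-type for the modified
data `(Σ_X, ε_X)` is the free `(Σ,ε)`-algebra on `X`. -/
theorem free_algebras_from_qw_types
    (hqw : ∀ (S : Sig.{u}) (ε : EqSys S), Nonempty (QWType S ε))
    (S : Sig.{u}) (ε : EqSys S) (X : Type u) :
    (∃ (F : Type u) (α : SPoly S F → F) (ηX : X → F), IsFreeAlg S ε X F α ηX) ∧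
    (∀ Q : QWType (sigX S X) (eqsX S ε X),
      IsFreeAlg S ε X Q.QW
        (fun s => Q.intro ⟨Sum.inr s.1, s.2⟩)
        (fun x => Q.intro ⟨Sum.inl x, fun h => h.elim⟩)) := by
  have main : ∀ Q : QWType (sigX S X) (eqsX S ε X),
      IsFreeAlg S ε X Q.QW
        (fun s => Q.intro ⟨Sum.inr s.1, s.2⟩)
        (fun x => Q.intro ⟨Sum.inl x, fun h => h.elim⟩) := by
    intro Q
    constructor
    · intro e ρ
      have := Q.equate e ρ
      simpa only [eqsX, bind_embed] using this
    · intro Y β hβ g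
      -- the compatible algebra on the modified signature
      let β' : SPoly (sigX S X) Y → Y := fun s =>
        Sum.rec (motive := fun c => ((sigX S X).B c → Y) → Y)
          (fun x _ => g x) (fun a b => β ⟨a, b⟩) s.1 s.2
      have hβ' : Sat (eqsX S ε X) β' := by
        intro e ρ
        exact (bind_embed β' ρ (ε.l e)).trans ((hβ e ρ).trans (bind_embed β' ρ (ε.r e)).symm)
      refine ⟨Q.qwrec Y β' hβ', ⟨fun s => Q.qwrechom Y β' hβ' ⟨Sum.inr s.1, s.2⟩,
        fun x => Q.qwrechom Y β' hβ' ⟨Sum.inl x, fun h => h.elim⟩⟩, ?_⟩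
      rintro h ⟨hhom, hη⟩
      refine (Q.qwuniq Y β' hβ' h ?_).symm ▸ rfl
      rintro ⟨a, b⟩
      cases a with
      | inl x =>
        have hb : b = fun h => h.elim := funext fun h => h.elim
        subst hb
        exact hη x
      | inr a => exact hhom ⟨a, b⟩
  exact ⟨(hqw _ _).elim (fun Q => ⟨Q.QW, _, _, main Q⟩), main⟩
end

section
/- Suppose A : 𝓤 has a wisc (C : 𝓤, E : C → 𝓤). If B : A → 𝓤 and φ : ∏_{x:A} (B x → Prop) satisfy ∀ x : A, ∃ y : B x, φ x y, then there exist c : C, a surjection p : E c → A, and a function q : ∏_{z : E c} B (p z) such that ∀ z : E c, φ (p z) (q z). -/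
universe u

/-- `(C, E)` is a wisc (weakly initial set of covers) for `Y`: every surjection
`q : X → Y` in the universe is factored through by a cover `E c → Y` from the
family. -/
def IsWisc (C : Type u) (E : C → Type u) (Y : Type u) : Prop :=
  ∀ (X : Type u) (q : X → Y), Function.Surjective q →
    ∃ (c : C) (f : E c → X), Function.Surjective (q ∘ f)

/-- collection lemma from a wisc. -/
theorem wisc_collection (A : Type u) (C : Type u) (E : C → Type u)
    (hw : IsWisc C E A) (B : A → Type u) (φ : ∀ x : A, B x → Prop)
    (h : ∀ x : A, ∃ y : B x, φ x y) :
    ∃ (c : C) (p : E c → A), Function.Surjective p ∧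
      ∃ q : ∀ z : E c, B (p z), ∀ z : E c, φ (p z) (q z) := by
  obtain ⟨c, f, hf⟩ := hw (Σ x : A, {y : B x // φ x y}) Sigma.fst
    (fun x => (h x).elim fun y hy => ⟨⟨x, y, hy⟩, rfl⟩)
  exact ⟨c, _, hf, fun z => (f z).2.1, fun z => (f z).2.2⟩
end

section
/- Suppose taking powers by B a preserves Size-indexed colimits for every a : A (so the comparison maps for power diagrams are injective and surjective). Then the polynomial endofunctor S_Σ(X) = Σ_{a:A} (B a → X) preserves Size-indexed colimits: for every diagram (D, δ), the canonical map κ : colim(S_Σ ∘ D) → S_Σ(colim D), sending [i, (a, b)] to (a, (ν_D)_i ∘ b), is an isomorphism. -/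
/-! An element of `S_Σ(colim D)` is a shape `a` together with a map `B a → colim D`. Surjectivity of
the power comparison map for `B a` says such a map factors through one stage `D_i`, giving a
preimage of `κ`; its injectivity says two stagewise maps with the same image agree at a later
stage, which is exactly when their classes in `colim (S_Σ ∘ D)` coincide. -/

universe u

/-- A type of sizes: a transitive well-founded relation `<` with a
distinguished element and binary strict upper bounds `⊔ˢ`. -/
structure SizeType : Type (u + 1) where
  S : Type u
  lt : S → S → Prop
  trans : ∀ {i j k : S}, lt i j → lt j k → lt i k
  wf : ∀ φ : S → Prop, (∀ i, (∀ j, lt j i → φ j) → φ i) → ∀ i, φ i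
  zero : S
  sup : S → S → S
  lt_sup_left : ∀ i j, lt i (sup i j)
  lt_sup_right : ∀ i j, lt j (sup i j)

/-- A `Size`-indexed diagram in the universe. -/
structure Diagram (Z : SizeType.{u}) : Type (u + 1) where
  D : Z.S → Type u
  δ : ∀ {i j : Z.S}, Z.lt i j → D i → D j
  comp : ∀ {i j k : Z.S} (hij : Z.lt i j) (hjk : Z.lt j k) (x : D i),
    δ (Z.trans hij hjk) x = δ hjk (δ hij x)

/-- The relation `(i, x) ∼ (j, y)` iff the two elements become equal at some
common later stage `k`. -/
def simRel (Z : SizeType.{u}) (Dg : Diagram Z) (p q : Σ i : Z.S, Dg.D i) : Prop :=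
  ∃ (k : Z.S) (h₁ : Z.lt p.1 k) (h₂ : Z.lt q.1 k), Dg.δ h₁ p.2 = Dg.δ h₂ q.2

/-- The colimit of a `Size`-indexed diagram, as a quotient of `Σ_i D_i`. -/
def Colim (Z : SizeType.{u}) (Dg : Diagram Z) : Type u := Quot (simRel Z Dg)

/-- The cocone maps `(ν_D)_i x = [i, x]` into the colimit. -/
def nu (Z : SizeType.{u}) (Dg : Diagram Z) (i : Z.S) (x : Dg.D i) : Colim Z Dg :=
  Quot.mk _ ⟨i, x⟩

/-- The power diagram `D^X` with `(D^X)_i = X → D_i`. -/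
def powerDiagram (Z : SizeType.{u}) (Dg : Diagram Z) (X : Type u) : Diagram Z where
  D := fun i => X → Dg.D i
  δ := fun h f x => Dg.δ h (f x)
  comp := fun hij hjk f => funext fun x => Dg.comp hij hjk (f x)

/-- The composite diagram `S_Σ ∘ D`. -/
def sigmaDiagram (Z : SizeType.{u}) (S : Sig.{u}) (Dg : Diagram Z) : Diagram Z where
  D := fun i => SPoly S (Dg.D i)
  δ := fun h s => ⟨s.1, fun x => Dg.δ h (s.2 x)⟩
  comp := fun hij hjk s =>
    congrArg (Sigma.mk s.1) (funext fun x => Dg.comp hij hjk (s.2 x))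

section Colim

variable (Z : SizeType.{u}) (Dg : Diagram Z)

lemma simRel_equivalence : Equivalence (simRel Z Dg) where
  refl p := ⟨Z.sup p.1 p.1, Z.lt_sup_left _ _, Z.lt_sup_left _ _, rfl⟩
  symm := fun ⟨k, h₁, h₂, h⟩ => ⟨k, h₂, h₁, h.symm⟩
  trans := by
    rintro p q r ⟨k, hpk, hqk, hk⟩ ⟨l, hql, hrl, hl⟩
    refine ⟨Z.sup k l, Z.trans hpk (Z.lt_sup_left k l), Z.trans hrl (Z.lt_sup_right k l), ?_⟩
    calc Dg.δ _ p.2 = Dg.δ (Z.lt_sup_left k l) (Dg.δ hpk p.2) := Dg.comp _ _ _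
      _ = Dg.δ (Z.lt_sup_left k l) (Dg.δ hqk q.2) := by rw [hk]
      _ = Dg.δ (Z.lt_sup_right k l) (Dg.δ hql q.2) := by rw [← Dg.comp, ← Dg.comp]
      _ = Dg.δ (Z.lt_sup_right k l) (Dg.δ hrl r.2) := by rw [hl]
      _ = Dg.δ _ r.2 := (Dg.comp _ _ _).symm

variable {Z Dg}

lemma simRel_of_nu_eq {i j : Z.S} {x : Dg.D i} {y : Dg.D j} (h : nu Z Dg i x = nu Z Dg j y) :
    simRel Z Dg ⟨i, x⟩ ⟨j, y⟩ :=
  (simRel_equivalence Z Dg).eqvGen_iff.mp (Quot.eqvGen_exact h)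

end Colim

section PowerComparison

variable {Z : SizeType.{u}} {Dg : Diagram Z} {X : Type u}
  {κ : Colim Z (powerDiagram Z Dg X) → (X → Colim Z Dg)}

lemma exists_lt_comp_eq_of_power_injective
    (hκ : ∀ (i : Z.S) (f : X → Dg.D i), κ (nu Z (powerDiagram Z Dg X) i f) = fun x => nu Z Dg i (f x))
    (hinj : Function.Injective κ) {i j : Z.S} {f : X → Dg.D i} {g : X → Dg.D j}
    (h : (fun x => nu Z Dg i (f x)) = fun x => nu Z Dg j (g x)) :
    ∃ (k : Z.S) (hik : Z.lt i k) (hjk : Z.lt j k),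
      (fun x => Dg.δ hik (f x)) = fun x => Dg.δ hjk (g x) :=
  simRel_of_nu_eq (hinj (by rw [hκ, hκ, h]))

lemma exists_nu_comp_eq_of_power_surjective
    (hκ : ∀ (i : Z.S) (f : X → Dg.D i), κ (nu Z (powerDiagram Z Dg X) i f) = fun x => nu Z Dg i (f x))
    (hsurj : Function.Surjective κ) (g : X → Colim Z Dg) :
    ∃ (i : Z.S) (f : X → Dg.D i), (fun x => nu Z Dg i (f x)) = g := by
  obtain ⟨c, rfl⟩ := hsurj g
  induction c using Quot.ind with
  | mk p => exact ⟨p.1, p.2, (hκ p.1 p.2).symm⟩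

end PowerComparison

section PolyComparison

variable (Z : SizeType.{u}) (S : Sig.{u}) (Dg : Diagram Z)

def polyComparison : Colim Z (sigmaDiagram Z S Dg) → SPoly S (Colim Z Dg) :=
  Quot.lift (fun p => ⟨p.2.1, fun x => nu Z Dg p.1 (p.2.2 x)⟩) <| by
    rintro ⟨i, a, f⟩ ⟨j, a', g⟩ ⟨k, hik, hjk, h⟩
    obtain ⟨rfl, h⟩ := Sigma.mk.inj_iff.mp h
    exact congrArg (Sigma.mk a) (funext fun x => Quot.sound ⟨k, hik, hjk, congrFun (eq_of_heq h) x⟩)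

lemma polyComparison_nu (i : Z.S) (s : SPoly S (Dg.D i)) :
    polyComparison Z S Dg (nu Z (sigmaDiagram Z S Dg) i s) = ⟨s.1, fun x => nu Z Dg i (s.2 x)⟩ :=
  rfl

variable {Z S Dg}

lemma polyComparison_injective
    (hpow : ∀ (a : S.A) {i j : Z.S} {f : S.B a → Dg.D i} {g : S.B a → Dg.D j},
      (fun x => nu Z Dg i (f x)) = (fun x => nu Z Dg j (g x)) →
      ∃ (k : Z.S) (hik : Z.lt i k) (hjk : Z.lt j k),
        (fun x => Dg.δ hik (f x)) = fun x => Dg.δ hjk (g x)) :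
    Function.Injective (polyComparison Z S Dg) := by
  rintro ⟨i, a, f⟩ ⟨j, a', g⟩ h
  obtain ⟨rfl, h⟩ := Sigma.mk.inj_iff.mp h
  obtain ⟨k, hik, hjk, hk⟩ := hpow a (eq_of_heq h)
  exact Quot.sound ⟨k, hik, hjk, congrArg (Sigma.mk a) hk⟩

lemma polyComparison_surjective
    (hpow : ∀ (a : S.A) (g : S.B a → Colim Z Dg),
      ∃ (i : Z.S) (f : S.B a → Dg.D i), (fun x => nu Z Dg i (f x)) = g) :
    Function.Surjective (polyComparison Z S Dg) := by
  rintro ⟨a, g⟩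
  obtain ⟨i, f, rfl⟩ := hpow a g
  exact ⟨nu Z (sigmaDiagram Z S Dg) i ⟨a, f⟩, rfl⟩

end PolyComparison

/-- if taking powers by each `B a` preserves `Size`-indexed
colimits (the power comparison maps are bijective), then the polynomial
endofunctor `S_Σ` preserves `Size`-indexed colimits: the canonical map
`κ : colim (S_Σ ∘ D) → S_Σ(colim D)`, sending `[i, (a, b)]` to
`(a, (ν_D)_i ∘ b)`, is an isomorphism (a bijection). -/
theorem poly_endofunctor_cocontinuous (Z : SizeType.{u}) (S : Sig.{u})
    (hpow : ∀ (a : S.A) (Dg : Diagram Z),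
      ∃ κ : Colim Z (powerDiagram Z Dg (S.B a)) → (S.B a → Colim Z Dg),
        (∀ (i : Z.S) (f : S.B a → Dg.D i),
          κ (nu Z (powerDiagram Z Dg (S.B a)) i f) = fun x => nu Z Dg i (f x)) ∧
        Function.Bijective κ) :
    ∀ Dg : Diagram Z,
      ∃ κ : Colim Z (sigmaDiagram Z S Dg) → SPoly S (Colim Z Dg),
        (∀ (i : Z.S) (s : SPoly S (Dg.D i)),
          κ (nu Z (sigmaDiagram Z S Dg) i s) = ⟨s.1, fun x => nu Z Dg i (s.2 x)⟩) ∧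
        Function.Bijective κ := by
  intro Dg
  refine ⟨polyComparison Z S Dg, polyComparison_nu Z S Dg, ?_, ?_⟩
  · refine polyComparison_injective fun a _ _ _ _ h => ?_
    obtain ⟨κ, hκ, hbij⟩ := hpow a Dg
    exact exists_lt_comp_eq_of_power_injective hκ hbij.injective h
  · refine polyComparison_surjective fun a g => ?_
    obtain ⟨κ, hκ, hbij⟩ := hpow a Dg
    exact exists_nu_comp_eq_of_power_surjective hκ hbij.surjective g
end

section
/- Let (D, τ) be a ◇-fixed point Size-indexed Σ-structure and δ_{i,j} = τ_{i,j} ∘ η for i < j. Then δ satisfies the diagram composition law δ_{i,k} = δ_{j,k} ∘ δ_{i,j} for i < j < k, and moreover δ_{i,j}([k, t]_{R_i}) = [k, t]_{R_j} for all k < i and t : T_Σ D_k. -/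
universe u

/-- The functorial action `T_Σ f` of the free monad on `f : V → W`. -/
def Tm.map {S : Sig.{u}} {V W : Type u} (f : V → W) : Tm S V → Tm S W
  | .η v => .η (f v)
  | .σ a b => .σ a (fun x => (b x).map f)

/-- A `Size`-indexed `Σ`-structure: types `D_i` and maps
`τ_{j,i} : T_Σ(D_j) → D_i` for `j < i`. -/
structure SStruct (Z : SizeType.{u}) (S : Sig.{u}) : Type (u + 1) where
  D : Z.S → Type u
  τ : ∀ {j i : Z.S}, Z.lt j i → Tm S (D j) → D i

/-- The carrier `Σ_{j<i} T_Σ(D_j)` underlying `◇_i D`. -/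
def Pre (Z : SizeType.{u}) (S : Sig.{u}) (st : SStruct Z S) (i : Z.S) : Type u :=
  Σ j : { j : Z.S // Z.lt j i }, Tm S (st.D j.1)

/-- The relation `R_i` on `Σ_{j<i} T_Σ(D_j)`: instances of the equations at a
common stage, unfolding of `η ∘ τ`, and pushing `τ` under `σ`-nodes. -/
def RelQ (Z : SizeType.{u}) (S : Sig.{u}) (ε : EqSys S) (st : SStruct Z S)
    (i : Z.S) (p q : Pre Z S st i) : Prop :=
  (∃ _ : q.1.1 = p.1.1, ∃ (e : ε.E) (ρ : ε.V e → st.D p.1.1),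
      p.2 = (ε.l e).map ρ ∧ HEq q.2 ((ε.r e).map ρ)) ∨
  (∃ h : Z.lt q.1.1 p.1.1, p.2 = .η (st.τ h q.2)) ∨
  (∃ (h : Z.lt q.1.1 p.1.1) (a : S.A) (b : S.B a → Tm S (st.D q.1.1)),
      q.2 = .σ a b ∧ p.2 = .σ a (fun x => .η (st.τ h (b x))))

/-- The quotient `◇_i D = (Σ_{j<i} T_Σ(D_j)) / R_i`. -/
def Diam (Z : SizeType.{u}) (S : Sig.{u}) (ε : EqSys S) (st : SStruct Z S)
    (i : Z.S) : Type u :=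
  Quot (RelQ Z S ε st i)

/-- A `◇`-fixed point: `D_i = ◇_i(D below i)` and `τ_{j,i} t = [j, t]_{R_i}`
(heterogeneously). -/
def IsFixed (Z : SizeType.{u}) (S : Sig.{u}) (ε : EqSys S)
    (st : SStruct Z S) : Prop :=
  (∀ i : Z.S, st.D i = Diam Z S ε st i) ∧
  (∀ (i j : Z.S) (h : Z.lt j i) (t : Tm S (st.D j)),
    HEq (st.τ h t) (Quot.mk (RelQ Z S ε st i) ⟨⟨j, h⟩, t⟩))

/-- for a `◇`-fixed point `(D, τ)`, the maps
`δ_{i,j} = τ_{i,j} ∘ η` satisfy the diagram composition law, and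
`δ_{i,j}([k, t]_{R_i}) = [k, t]_{R_j}` for `k < i < j`. -/
theorem fixed_point_delta_laws (Z : SizeType.{u}) (S : Sig.{u}) (ε : EqSys S)
    (st : SStruct Z S) (hfix : IsFixed Z S ε st) :
    (∀ (i j k : Z.S) (hij : Z.lt i j) (hjk : Z.lt j k) (x : st.D i),
      st.τ (Z.trans hij hjk) (.η x) = st.τ hjk (.η (st.τ hij (.η x)))) ∧
    (∀ (i j : Z.S) (hij : Z.lt i j) (k : Z.S) (hki : Z.lt k i)
        (t : Tm S (st.D k)),
      HEq
        (st.τ hij (Tm.η (cast (hfix.1 i).symm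
          (Quot.mk (RelQ Z S ε st i) ⟨⟨k, hki⟩, t⟩))))
        (Quot.mk (RelQ Z S ε st j) ⟨⟨k, Z.trans hki hij⟩, t⟩)) := by
  obtain ⟨hD, hτ⟩ := hfix
  constructor
  · intro i j k hij hjk x
    have h1 := hτ k i (Z.trans hij hjk) (.η x)
    have h2 := hτ k j hjk (.η (st.τ hij (.η x)))
    have hq : Quot.mk (RelQ Z S ε st k) ⟨⟨i, Z.trans hij hjk⟩, .η x⟩
        = Quot.mk (RelQ Z S ε st k) ⟨⟨j, hjk⟩, .η (st.τ hij (.η x))⟩ :=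
      by symm; exact Quot.sound (Or.inr (Or.inl ⟨hij, rfl⟩))
    exact eq_of_heq ((h1.trans (heq_of_eq hq)).trans h2.symm)
  · intro i j hij k hki t
    have hc : cast (hD i).symm (Quot.mk (RelQ Z S ε st i) ⟨⟨k, hki⟩, t⟩)
        = st.τ hki t :=
      eq_of_heq ((cast_heq _ _).trans (hτ i k hki t).symm)
    rw [hc]
    have h2 := hτ j i hij (.η (st.τ hki t))
    have hq : Quot.mk (RelQ Z S ε st j) ⟨⟨i, hij⟩, .η (st.τ hki t)⟩
        = Quot.mk (RelQ Z S ε st j) ⟨⟨k, Z.trans hki hij⟩, t⟩ :=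
      by exact Quot.sound (Or.inr (Or.inl ⟨hki, rfl⟩))
    exact h2.trans (heq_of_eq hq)
end

section
/- Let (D, τ) be a ◇-fixed point with δ_{i,j} = τ_{i,j} ∘ η, and suppose Size has strict upper bounds for families of sizes indexed by B a for each a : A. Then for all i < j and every t : T_Σ D_i, there exists k with j < k and τ_{j,k}(T_Σ δ_{i,j} t) = τ_{i,k} t. -/
universe u

/-- Lifting along an `η ∘ τ` unfolding: `τ_{i,k} v = τ_{m,k}(η (τ_{i,m} v))`. -/
theorem tau_eta_lift (Z : SizeType.{u}) (S : Sig.{u}) (ε : EqSys S)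
    (st : SStruct Z S) (hfix : IsFixed Z S ε st)
    (i m k : Z.S) (him : Z.lt i m) (hmk : Z.lt m k) (hik : Z.lt i k)
    (v : Tm S (st.D i)) :
    st.τ hik v = st.τ hmk (.η (st.τ him v)) := by
  have h1 := hfix.2 k i hik v
  have h2 := hfix.2 k m hmk (.η (st.τ him v))
  have hq : Quot.mk (RelQ Z S ε st k) ⟨⟨i, hik⟩, v⟩ =
      Quot.mk (RelQ Z S ε st k) ⟨⟨m, hmk⟩, .η (st.τ him v)⟩ :=
    (Quot.sound (r := RelQ Z S ε st k) (Or.inr (Or.inl ⟨him, rfl⟩))).symm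
  exact eq_of_heq (h1.trans ((heq_of_eq hq).trans h2.symm))

/-- Pushing `τ` under a `σ`-node:
`τ_{j,k}(σ a b) = τ_{m,k}(σ a (η ∘ τ_{j,m} ∘ b))`. -/
theorem tau_sigma_push (Z : SizeType.{u}) (S : Sig.{u}) (ε : EqSys S)
    (st : SStruct Z S) (hfix : IsFixed Z S ε st)
    (j m k : Z.S) (hjm : Z.lt j m) (hmk : Z.lt m k) (hjk : Z.lt j k)
    (a : S.A) (b : S.B a → Tm S (st.D j)) :
    st.τ hjk (.σ a b) = st.τ hmk (.σ a (fun x => .η (st.τ hjm (b x)))) := by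
  have h1 := hfix.2 k j hjk (.σ a b)
  have h2 := hfix.2 k m hmk (.σ a (fun x => .η (st.τ hjm (b x))))
  have hq : Quot.mk (RelQ Z S ε st k) ⟨⟨j, hjk⟩, .σ a b⟩ =
      Quot.mk (RelQ Z S ε st k)
        ⟨⟨m, hmk⟩, .σ a (fun x => .η (st.τ hjm (b x)))⟩ :=
    (Quot.sound (r := RelQ Z S ε st k) (Or.inr (Or.inr ⟨hjm, a, b, rfl, rfl⟩))).symm
  exact eq_of_heq (h1.trans ((heq_of_eq hq).trans h2.symm))

/-- for a `◇`-fixed point `(D, τ)` with `δ_{i,j} = τ_{i,j} ∘ η`,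
if `Size` has strict upper bounds for families of sizes indexed by each
`B a`, then for all `i < j` and `t : T_Σ(D_i)` there is a `k > j` with
`τ_{j,k}(T_Σ δ_{i,j} t) = τ_{i,k} t`. -/
theorem fixed_point_tau_coherence (Z : SizeType.{u}) (S : Sig.{u})
    (ε : EqSys S) (st : SStruct Z S) (hfix : IsFixed Z S ε st)
    (hub : ∀ (a : S.A) (f : S.B a → Z.S), ∃ k : Z.S, ∀ x, Z.lt (f x) k) :
    ∀ (i j : Z.S) (hij : Z.lt i j) (t : Tm S (st.D i)),
      ∃ (k : Z.S) (hjk : Z.lt j k),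
        st.τ hjk (t.map (fun x => st.τ hij (.η x))) =
          st.τ (Z.trans hij hjk) t := by
  intro i j hij t
  induction t with
  | η v =>
      refine ⟨Z.sup j j, Z.lt_sup_left j j, ?_⟩
      exact (tau_eta_lift Z S ε st hfix i j _ hij (Z.lt_sup_left j j) _
        (.η v)).symm
  | σ a b IH =>
      choose f hf hbx using IH
      obtain ⟨k', hk'⟩ := hub a f
      set m := Z.sup j k' with hm
      have hjm : Z.lt j m := Z.lt_sup_left j k'
      have hk'm : Z.lt k' m := Z.lt_sup_right j k'
      have him : Z.lt i m := Z.trans hij hjm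
      refine ⟨Z.sup m m, Z.trans hjm (Z.lt_sup_left m m), ?_⟩
      have hmk : Z.lt m (Z.sup m m) := Z.lt_sup_left m m
      have lhs : st.τ (Z.trans hjm hmk)
          ((Tm.σ a b).map (fun x => st.τ hij (.η x))) =
          st.τ hmk (.σ a (fun x =>
            .η (st.τ hjm ((b x).map (fun x => st.τ hij (.η x)))))) :=
        tau_sigma_push Z S ε st hfix j m _ hjm hmk _ a _
      have rhs : st.τ (Z.trans hij (Z.trans hjm hmk)) (Tm.σ a b) =
          st.τ hmk (.σ a (fun x => .η (st.τ him (b x)))) :=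
        tau_sigma_push Z S ε st hfix i m _ him hmk _ a b
      rw [lhs, rhs]
      congr 1
      congr 1
      funext x
      congr 1
      have hfx : Z.lt (f x) m := Z.trans (hk' x) hk'm
      have e1 : st.τ hjm ((b x).map (fun x => st.τ hij (.η x))) =
          st.τ hfx (.η (st.τ (hf x) ((b x).map (fun x => st.τ hij (.η x))))) :=
        tau_eta_lift Z S ε st hfix j (f x) m (hf x) hfx hjm _
      have e2 : st.τ him (b x) =
          st.τ hfx (.η (st.τ (Z.trans hij (hf x)) (b x))) :=
        tau_eta_lift Z S ε st hfix i (f x) m (Z.trans hij (hf x)) hfx him _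
      rw [e1, e2, hbx x]
end

section
/- Let (D, τ) be a ◇-fixed point, QW = colim D with cocone maps (ν_D)_i, and qwintro : S_Σ(QW) → QW the algebra structure induced via the isomorphism S_Σ(colim D) ≅ colim(S_Σ ∘ D) and the cocone S_Σ D_i → D_{suc i} → colim D. Then the algebra (QW, qwintro) satisfies the system of equations ε: for every e : E and ρ : V e → QW, (l e ⋙ ρ) = (r e ⋙ ρ). -/
universe u

/-- The colimit `QW = colim D` of the diagram `δ_{i,j} = τ_{i,j} ∘ η`
underlying a `Σ`-structure, as a quotient of `Σ_i D_i`. -/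
def ColimSt (Z : SizeType.{u}) (S : Sig.{u}) (st : SStruct Z S) : Type u :=
  Quot (fun p q : Σ i : Z.S, st.D i =>
    ∃ (k : Z.S) (h₁ : Z.lt p.1 k) (h₂ : Z.lt q.1 k),
      st.τ h₁ (.η p.2) = st.τ h₂ (.η q.2))

/-- The cocone maps `(ν_D)_i` into `colim D`. -/
def nuSt (Z : SizeType.{u}) (S : Sig.{u}) (st : SStruct Z S) (i : Z.S)
    (x : st.D i) : ColimSt Z S st :=
  Quot.mk _ ⟨i, x⟩


section Aux

variable (Z : SizeType.{u}) (S : Sig.{u}) (ε : EqSys S) (st : SStruct Z S)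
  (hfix : IsFixed Z S ε st)

include hfix

theorem tau_eq_of_mk_eq {i j j' : Z.S} (h : Z.lt j i) (h' : Z.lt j' i)
    (t : Tm S (st.D j)) (t' : Tm S (st.D j'))
    (hq : Quot.mk (RelQ Z S ε st i) ⟨⟨j, h⟩, t⟩ =
          Quot.mk (RelQ Z S ε st i) ⟨⟨j', h'⟩, t'⟩) :
    st.τ h t = st.τ h' t' := by
  have h1 := hfix.2 i j h t
  have h2 := hfix.2 i j' h' t'
  rw [hq] at h1
  exact eq_of_heq (h1.trans h2.symm)

/-- `ν_k (τ h (η x)) = ν_j x`. -/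
theorem nu_tau_eta {j k : Z.S} (h : Z.lt j k) (x : st.D j) :
    nuSt Z S st k (st.τ h (.η x)) = nuSt Z S st j x := by
  apply Quot.sound
  have hk : Z.lt k (Z.sup k k) := Z.lt_sup_left k k
  refine ⟨Z.sup k k, hk, Z.trans h hk, ?_⟩
  apply tau_eq_of_mk_eq Z S ε st hfix
  apply Quot.sound
  exact Or.inr (Or.inl ⟨h, rfl⟩)

/-- `ν_{k'} (τ h' t) = ν_k (τ h t)` for `j < k < k'`. -/
theorem nu_tau_gen {j k k' : Z.S} (h : Z.lt j k) (h' : Z.lt j k')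
    (hk : Z.lt k k') (t : Tm S (st.D j)) :
    nuSt Z S st k' (st.τ h' t) = nuSt Z S st k (st.τ h t) := by
  have step : st.τ hk (.η (st.τ h t)) = st.τ h' t := by
    apply tau_eq_of_mk_eq Z S ε st hfix
    apply Quot.sound
    exact Or.inr (Or.inl ⟨h, rfl⟩)
  rw [← step]
  exact nu_tau_eta Z S ε st hfix hk (st.τ h t)

theorem bind_eq_nu_tau
    (qwintro : SPoly S (ColimSt Z S st) → ColimSt Z S st)
    (hintro : ∀ (i : Z.S) (a : S.A) (b : S.B a → st.D i),
      qwintro ⟨a, fun x => nuSt Z S st i (b x)⟩ =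
        nuSt Z S st (Z.sup i i)
          (st.τ (Z.lt_sup_left i i) (.σ a (fun x => .η (b x)))))
    {V : Type u} (i : Z.S) (ρ' : V → st.D i) (t : Tm S V) :
    t.bind qwintro (fun v => nuSt Z S st i (ρ' v)) =
      nuSt Z S st (Z.sup i i) (st.τ (Z.lt_sup_left i i) (t.map ρ')) := by
  induction t with
  | η v =>
    exact (nu_tau_eta Z S ε st hfix (Z.lt_sup_left i i) (ρ' v)).symm
  | σ a b ih =>
    show qwintro ⟨a, fun x => (b x).bind qwintro _⟩ = _
    have : (fun x => (b x).bind qwintro (fun v => nuSt Z S st i (ρ' v))) =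
        fun x => nuSt Z S st (Z.sup i i)
          (st.τ (Z.lt_sup_left i i) ((b x).map ρ')) := funext ih
    rw [this, hintro]
    set si := Z.sup i i
    set ssi := Z.sup si si
    have hsi : Z.lt si ssi := Z.lt_sup_left si si
    have hi : Z.lt i ssi := Z.trans (Z.lt_sup_left i i) hsi
    have step : st.τ hsi (.σ a (fun x => .η (st.τ (Z.lt_sup_left i i) ((b x).map ρ')))) =
        st.τ hi (.σ a (fun x => (b x).map ρ')) := by
      apply tau_eq_of_mk_eq Z S ε st hfix
      apply Quot.sound
      exact Or.inr (Or.inr ⟨Z.lt_sup_left i i, a, fun x => (b x).map ρ', rfl, rfl⟩)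
    show nuSt Z S st ssi (st.τ hsi _) = _
    rw [step]
    exact nu_tau_gen Z S ε st hfix (Z.lt_sup_left i i) hi hsi _

end Aux

/-- for a `◇`-fixed point `(D, τ)` with `QW = colim D`, the
algebra structure `qwintro` induced by the cocone
`S_Σ D_i → T_Σ D_i → D_{suc i} → colim D` (characterized by `hintro`, where
`suc i = i ⊔ˢ i`) satisfies the system of equations `ε`, given that powers by
each `V e` preserve the colimit (every `ρ : V e → QW` factors through some
`(ν_D)_i`). -/
theorem qw_algebra_satisfies_equations (Z : SizeType.{u}) (S : Sig.{u})
    (ε : EqSys S) (st : SStruct Z S) (hfix : IsFixed Z S ε st)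
    (qwintro : SPoly S (ColimSt Z S st) → ColimSt Z S st)
    (hintro : ∀ (i : Z.S) (a : S.A) (b : S.B a → st.D i),
      qwintro ⟨a, fun x => nuSt Z S st i (b x)⟩ =
        nuSt Z S st (Z.sup i i)
          (st.τ (Z.lt_sup_left i i) (.σ a (fun x => .η (b x)))))
    (hfactor : ∀ (e : ε.E) (ρ : ε.V e → ColimSt Z S st),
      ∃ (i : Z.S) (ρ' : ε.V e → st.D i),
        ρ = fun v => nuSt Z S st i (ρ' v)) :
    Sat ε qwintro := by
  intro e ρ
  obtain ⟨i, ρ', rfl⟩ := hfactor e ρ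
  rw [bind_eq_nu_tau Z S ε st hfix qwintro hintro i ρ' (ε.l e),
      bind_eq_nu_tau Z S ε st hfix qwintro hintro i ρ' (ε.r e)]
  congr 1
  apply tau_eq_of_mk_eq Z S ε st hfix
  apply Quot.sound
  exact Or.inl ⟨rfl, e, ρ', rfl, HEq.rfl⟩
end

section
/- For each i : Size, any two upto-i ◇-fixed points are equal; consequently, by well-founded recursion there exists an upto-i ◇-fixed point for every i, and these assemble into a (total) Size-indexed Σ-structure (D, τ) that is a ◇-fixed point: D_i = ◇_i(D below i) and τ_{j,i} t = [j, t]_{R_i} for j < i. -/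
universe u

/-- A `(↓i)`-indexed `Σ`-structure: types `D_j` for `j < i` and maps
`τ_{k,j} : T_Σ(D_k) → D_j` for `k < j < i`. -/
structure BStruct (Z : SizeType.{u}) (S : Sig.{u}) (i : Z.S) : Type (u + 1) where
  D : ∀ j : Z.S, Z.lt j i → Type u
  τ : ∀ {k j : Z.S} (hk : Z.lt k i) (hj : Z.lt j i),
    Z.lt k j → Tm S (D k hk) → D j hj

/-- The carrier `Σ_{k<j} T_Σ(D_k)` underlying `◇_j` of the restriction of a
bounded structure below `j < i`. -/
def BPre (Z : SizeType.{u}) (S : Sig.{u}) {i : Z.S} (st : BStruct Z S i)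
    (j : Z.S) (hj : Z.lt j i) : Type u :=
  Σ k : { k : Z.S // Z.lt k j }, Tm S (st.D k.1 (Z.trans k.2 hj))

/-- The relation `R_j` on `Σ_{k<j} T_Σ(D_k)` for a bounded structure. -/
def BRel (Z : SizeType.{u}) (S : Sig.{u}) (ε : EqSys S) {i : Z.S}
    (st : BStruct Z S i) (j : Z.S) (hj : Z.lt j i)
    (p q : BPre Z S st j hj) : Prop :=
  (∃ _ : q.1.1 = p.1.1, ∃ (e : ε.E) (ρ : ε.V e → st.D p.1.1 (Z.trans p.1.2 hj)),
      p.2 = (ε.l e).map ρ ∧ HEq q.2 ((ε.r e).map ρ)) ∨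
  (∃ h : Z.lt q.1.1 p.1.1,
      p.2 = .η (st.τ (Z.trans q.1.2 hj) (Z.trans p.1.2 hj) h q.2)) ∨
  (∃ (h : Z.lt q.1.1 p.1.1) (a : S.A)
      (b : S.B a → Tm S (st.D q.1.1 (Z.trans q.1.2 hj))),
      q.2 = .σ a b ∧
      p.2 = .σ a (fun x => .η (st.τ (Z.trans q.1.2 hj) (Z.trans p.1.2 hj) h (b x))))

/-- The quotient `◇_j` of the restriction of a bounded structure below `j`. -/
def BDiam (Z : SizeType.{u}) (S : Sig.{u}) (ε : EqSys S) {i : Z.S}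
    (st : BStruct Z S i) (j : Z.S) (hj : Z.lt j i) : Type u :=
  Quot (BRel Z S ε st j hj)

/-- An upto-`i` `◇`-fixed point: for all `j < i`, `D_j = ◇_j(D below j)` and
`τ_{k,j} t = [k, t]_{R_j}` (heterogeneously). -/
def UptoFixed (Z : SizeType.{u}) (S : Sig.{u}) (ε : EqSys S) (i : Z.S)
    (st : BStruct Z S i) : Prop :=
  ∀ (j : Z.S) (hj : Z.lt j i),
    (st.D j hj = BDiam Z S ε st j hj) ∧
    (∀ (k : Z.S) (hk : Z.lt k j) (t : Tm S (st.D k (Z.trans hk hj))),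
      HEq (st.τ (Z.trans hk hj) hj hk t)
        (Quot.mk (BRel Z S ε st j hj) ⟨⟨k, hk⟩, t⟩))


namespace UptoAux

variable (Z : SizeType.{u}) (S : Sig.{u}) (ε : EqSys S)

theorem wfLt : WellFounded Z.lt :=
  ⟨fun i => Z.wf (Acc Z.lt) (fun i ih => Acc.intro i ih) i⟩

/-- `◇_i` of a structure bounded by `i` itself. -/
def TopPre {i : Z.S} (b : BStruct Z S i) : Type u :=
  Σ k : { k : Z.S // Z.lt k i }, Tm S (b.D k.1 k.2)

def TopRel {i : Z.S} (b : BStruct Z S i) (p q : TopPre Z S b) : Prop :=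
  (∃ _ : q.1.1 = p.1.1, ∃ (e : ε.E) (ρ : ε.V e → b.D p.1.1 p.1.2),
      p.2 = (ε.l e).map ρ ∧ HEq q.2 ((ε.r e).map ρ)) ∨
  (∃ h : Z.lt q.1.1 p.1.1, p.2 = .η (b.τ q.1.2 p.1.2 h q.2)) ∨
  (∃ (h : Z.lt q.1.1 p.1.1) (a : S.A) (b' : S.B a → Tm S (b.D q.1.1 q.1.2)),
      q.2 = .σ a b' ∧ p.2 = .σ a (fun x => .η (b.τ q.1.2 p.1.2 h (b' x))))

def TopDiam {i : Z.S} (b : BStruct Z S i) : Type u := Quot (TopRel Z S ε b)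

/-- Restriction of a bounded structure below `j < i`. -/
def res {i : Z.S} (st : BStruct Z S i) {j : Z.S} (hj : Z.lt j i) :
    BStruct Z S j where
  D k hk := st.D k (Z.trans hk hj)
  τ hk hk' h := st.τ (Z.trans hk hj) (Z.trans hk' hj) h

example {i : Z.S} (st : BStruct Z S i) {j : Z.S} (hj : Z.lt j i) :
    BDiam Z S ε st j hj = TopDiam Z S ε (res Z S st hj) := rfl

/-- Truncation of a total structure below `i`. -/
def toB (st : SStruct Z S) (i : Z.S) : BStruct Z S i where
  D j _ := st.D j
  τ _ _ h := st.τ h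

example (st : SStruct Z S) (i : Z.S) :
    Diam Z S ε st i = TopDiam Z S ε (toB Z S st i) := rfl

theorem res_fixed {i : Z.S} {st : BStruct Z S i} (hst : UptoFixed Z S ε i st)
    {j : Z.S} (hj : Z.lt j i) : UptoFixed Z S ε j (res Z S st hj) :=
  fun k hk => hst k (Z.trans hk hj)


theorem bext {i : Z.S} (s₁ s₂ : BStruct Z S i)
    (hD : ∀ j hj, s₁.D j hj = s₂.D j hj)
    (hτ : ∀ (k j : Z.S) (hk : Z.lt k i) (hj : Z.lt j i) (h : Z.lt k j)
      (t₁ : Tm S (s₁.D k hk)) (t₂ : Tm S (s₂.D k hk)), HEq t₁ t₂ →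
      HEq (s₁.τ hk hj h t₁) (s₂.τ hk hj h t₂)) : s₁ = s₂ := by
  obtain ⟨D₁, τ₁⟩ := s₁; obtain ⟨D₂, τ₂⟩ := s₂
  have hDD : D₁ = D₂ := funext fun j => funext fun hj => hD j hj
  subst hDD
  have : @τ₁ = @τ₂ := by
    funext k j hk hj h t
    exact eq_of_heq (hτ k j hk hj h t t HEq.rfl)
  rw [this]

theorem quot_mk_heq {i : Z.S} {b₁ b₂ : BStruct Z S i} (e : b₁ = b₂)
    {k : Z.S} (h : Z.lt k i) {t₁ : Tm S (b₁.D k h)} {t₂ : Tm S (b₂.D k h)}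
    (ht : HEq t₁ t₂) :
    HEq (Quot.mk (TopRel Z S ε b₁) ⟨⟨k, h⟩, t₁⟩)
        (Quot.mk (TopRel Z S ε b₂) ⟨⟨k, h⟩, t₂⟩) := by
  subst e; rw [eq_of_heq ht]

theorem uniq : ∀ (i : Z.S) (st₁ st₂ : BStruct Z S i),
    UptoFixed Z S ε i st₁ → UptoFixed Z S ε i st₂ → st₁ = st₂ := by
  intro i
  induction i using (wfLt Z).induction with
  | _ i IH =>
  intro st₁ st₂ h₁ h₂
  have key : ∀ (j : Z.S) (hj : Z.lt j i), res Z S st₁ hj = res Z S st₂ hj :=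
    fun j hj => IH j hj _ _ (res_fixed Z S ε h₁ hj) (res_fixed Z S ε h₂ hj)
  apply bext
  · intro j hj
    calc st₁.D j hj = BDiam Z S ε st₁ j hj := (h₁ j hj).1
      _ = TopDiam Z S ε (res Z S st₁ hj) := rfl
      _ = TopDiam Z S ε (res Z S st₂ hj) := by rw [key j hj]
      _ = st₂.D j hj := ((h₂ j hj).1).symm
  · intro k j hk hj h t₁ t₂ ht
    refine HEq.trans ((h₁ j hj).2 k h t₁) (HEq.trans ?_ ((h₂ j hj).2 k h t₂).symm)
    exact quot_mk_heq Z S ε (key j hj) h ht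


/-- The upto-`i` fixed point, by well-founded recursion. -/
noncomputable def F : ∀ i : Z.S, { st : BStruct Z S i // UptoFixed Z S ε i st } :=
  (wfLt Z).fix fun i rec => by
    -- `rec j hj` is the upto-`j` fixed point for `j < i`.
    have dkey : ∀ (j : Z.S) (hj : Z.lt j i) (k : Z.S) (h : Z.lt k j),
        (rec j hj).1.D k h = TopDiam Z S ε (rec k (Z.trans h hj)).1 := by
      intro j hj k h
      have e1 : (rec j hj).1.D k h = TopDiam Z S ε (res Z S (rec j hj).1 h) :=
        ((rec j hj).2 k h).1
      have e2 : res Z S (rec j hj).1 h = (rec k (Z.trans h hj)).1 :=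
        uniq Z S ε k _ _ (res_fixed Z S ε (rec j hj).2 h) (rec k (Z.trans h hj)).2
      rw [e1, e2]
    refine ⟨⟨fun j hj => TopDiam Z S ε (rec j hj).1,
      fun {k j} hk hj h t =>
        Quot.mk (TopRel Z S ε (rec j hj).1)
          ⟨⟨k, h⟩, cast (congrArg (Tm S) (dkey j hj k h)).symm t⟩⟩, ?_⟩
    intro j hj
    set st : BStruct Z S i :=
      ⟨fun j hj => TopDiam Z S ε (rec j hj).1,
       fun {k j} hk hj h t =>
        Quot.mk (TopRel Z S ε (rec j hj).1)
          ⟨⟨k, h⟩, cast (congrArg (Tm S) (dkey j hj k h)).symm t⟩⟩ with hstdef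
    have reskey : res Z S st hj = (rec j hj).1 := by
      apply bext
      · intro k hk
        exact (dkey j hj k hk).symm
      · intro k k' hk hk' h t₁ t₂ ht
        -- LHS: st.τ _, RHS: (rec j hj).1.τ
        have fixτ := ((rec j hj).2 k' hk').2 k h t₂
        have e2 : res Z S (rec j hj).1 hk' = (rec k' (Z.trans hk' hj)).1 :=
          uniq Z S ε k' _ _ (res_fixed Z S ε (rec j hj).2 hk')
            (rec k' (Z.trans hk' hj)).2
        refine HEq.trans ?_ fixτ.symm
        show HEq (Quot.mk (TopRel Z S ε (rec k' (Z.trans hk' hj)).1)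
            ⟨⟨k, h⟩, cast (congrArg (Tm S) (dkey k' (Z.trans hk' hj) k h)).symm t₁⟩)
          (Quot.mk (TopRel Z S ε (res Z S (rec j hj).1 hk')) ⟨⟨k, h⟩, t₂⟩)
        exact quot_mk_heq Z S ε e2.symm h
          (HEq.trans (cast_heq _ t₁) ht)
    constructor
    · show TopDiam Z S ε (rec j hj).1 = TopDiam Z S ε (res Z S st hj)
      rw [reskey]
    · intro k hk t
      show HEq (Quot.mk (TopRel Z S ε (rec j hj).1)
          ⟨⟨k, hk⟩, cast (congrArg (Tm S) (dkey j hj k hk)).symm t⟩)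
        (Quot.mk (TopRel Z S ε (res Z S st hj)) ⟨⟨k, hk⟩, t⟩)
      exact quot_mk_heq Z S ε reskey.symm hk (cast_heq _ t)


noncomputable def totD (i : Z.S) : Type u := TopDiam Z S ε (F Z S ε i).1

theorem fkey (i j : Z.S) (h : Z.lt j i) :
    (F Z S ε i).1.D j h = totD Z S ε j := by
  have e1 : (F Z S ε i).1.D j h = TopDiam Z S ε (res Z S (F Z S ε i).1 h) :=
    ((F Z S ε i).2 j h).1
  have e2 : res Z S (F Z S ε i).1 h = (F Z S ε j).1 :=
    uniq Z S ε j _ _ (res_fixed Z S ε (F Z S ε i).2 h) (F Z S ε j).2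
  rw [e1, e2]; rfl

noncomputable def tot : SStruct Z S where
  D := totD Z S ε
  τ {j i} h t :=
    Quot.mk (TopRel Z S ε (F Z S ε i).1)
      ⟨⟨j, h⟩, cast (congrArg (Tm S) (fkey Z S ε i j h)).symm t⟩

theorem tkey (i : Z.S) : toB Z S (tot Z S ε) i = (F Z S ε i).1 := by
  apply bext
  · intro j hj
    exact (fkey Z S ε i j hj).symm
  · intro j j' hj hj' h t₁ t₂ ht
    have fixτ := ((F Z S ε i).2 j' hj').2 j h t₂
    have e2 : res Z S (F Z S ε i).1 hj' = (F Z S ε j').1 :=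
      uniq Z S ε j' _ _ (res_fixed Z S ε (F Z S ε i).2 hj') (F Z S ε j').2
    refine HEq.trans ?_ fixτ.symm
    show HEq (Quot.mk (TopRel Z S ε (F Z S ε j').1)
        ⟨⟨j, h⟩, cast (congrArg (Tm S) (fkey Z S ε j' j h)).symm t₁⟩)
      (Quot.mk (TopRel Z S ε (res Z S (F Z S ε i).1 hj')) ⟨⟨j, h⟩, t₂⟩)
    exact quot_mk_heq Z S ε e2.symm h (HEq.trans (cast_heq _ t₁) ht)

theorem tot_fixed : IsFixed Z S ε (tot Z S ε) := by
  constructor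
  · intro i
    show TopDiam Z S ε (F Z S ε i).1 = TopDiam Z S ε (toB Z S (tot Z S ε) i)
    rw [tkey]
  · intro i j h t
    show HEq (Quot.mk (TopRel Z S ε (F Z S ε i).1)
        ⟨⟨j, h⟩, cast (congrArg (Tm S) (fkey Z S ε i j h)).symm t⟩)
      (Quot.mk (TopRel Z S ε (toB Z S (tot Z S ε) i)) ⟨⟨j, h⟩, t⟩)
    exact quot_mk_heq Z S ε (tkey Z S ε i).symm h (cast_heq _ t)

end UptoAux
/-- for each `i`, any two upto-`i` `◇`-fixed points are equal;
by well-founded recursion an upto-`i` `◇`-fixed point exists for every `i`;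
and these assemble into a total `Size`-indexed `Σ`-structure that is a
`◇`-fixed point. -/
theorem upto_fixed_points (Z : SizeType.{u}) (S : Sig.{u}) (ε : EqSys S) :
    (∀ (i : Z.S) (st₁ st₂ : BStruct Z S i),
      UptoFixed Z S ε i st₁ → UptoFixed Z S ε i st₂ → st₁ = st₂) ∧
    (∀ i : Z.S, ∃ st : BStruct Z S i, UptoFixed Z S ε i st) ∧
    (∃ st : SStruct Z S, IsFixed Z S ε st) := by
  refine ⟨UptoAux.uniq Z S ε, fun i => ⟨(UptoAux.F Z S ε i).1, (UptoAux.F Z S ε i).2⟩,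
    UptoAux.tot Z S ε, UptoAux.tot_fixed Z S ε⟩
end

section
/- Every W-suspension, given by data A' : 𝓤, B' : A' → 𝓤, C' : 𝓤, and l', r' : C' → A', is equivalent to the QW-type with signature A = A', B = B' and equations E = C', V c = B'(l' c) × B'(r' c), l c = σ(l' c, η ∘ π₁), r c = σ(r' c, η ∘ π₂) (i.e., each equation identifies the l'-node applied to the first projection of the variables with the r'-node applied to the second projection). -/
universe u

/-- The signature of a W-suspension: `A = A'`, `B = B'`. -/
def wsSig (A' : Type u) (B' : A' → Type u) : Sig.{u} := ⟨A', B'⟩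

/-- The equations of a W-suspension: one equation per `c : C'`, whose
variables comprise a `B'(l' c)`-indexed family (first component) together
with a `B'(r' c)`-indexed family (second component); the left-hand side is
the `l'`-node applied to the first-component variables and the right-hand
side is the `r'`-node applied to the second-component variables. -/
def wsEqs (A' : Type u) (B' : A' → Type u) (C' : Type u) (l' r' : C' → A') :
    EqSys (wsSig A' B') where
  E := C'
  V := fun c => B' (l' c) ⊕ B' (r' c)
  l := fun c => .σ (l' c) (fun y => .η (Sum.inl y))
  r := fun c => .σ (r' c) (fun y => .η (Sum.inr y))

theorem QWType.existsUnique_hom {S : Sig.{u}} {ε : EqSys S} (Q : QWType S ε) (X : Type u)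
    (α : SPoly S X → X) (hα : Sat ε α) :
    ∃! h : Q.QW → X, ∀ s : SPoly S Q.QW, h (Q.intro s) = α ⟨s.1, fun x => h (s.2 x)⟩ :=
  ⟨Q.qwrec X α hα, Q.qwrechom X α hα, fun h hh => (Q.qwuniq X α hα h hh).symm⟩

theorem sat_wsEqs_iff {A' : Type u} {B' : A' → Type u} {C' : Type u} {l' r' : C' → A'}
    {X : Type u} (α : SPoly (wsSig A' B') X → X) :
    Sat (wsEqs A' B' C' l' r') α ↔
      ∀ (c : C') (φ : B' (l' c) → X) (ψ : B' (r' c) → X), α ⟨l' c, φ⟩ = α ⟨r' c, ψ⟩ :=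
  ⟨fun h c φ ψ => h c (Sum.elim φ ψ), fun h c ρ => h c (ρ ∘ Sum.inl) (ρ ∘ Sum.inr)⟩

/-- every W-suspension, given by `A'`, `B'`, `C'`, `l'`, `r'`,
is equivalent to the QW-type for the above signature and equations: the
QW-type has the `sup` point constructor, the W-suspension cells
`sup (l' c) φ = sup (r' c) ψ`, and is initial (homotopy-initial, at set
level) among all algebras with such cells. -/
theorem wsuspension_is_qw (A' : Type u) (B' : A' → Type u) (C' : Type u)
    (l' r' : C' → A') (Q : QWType (wsSig A' B') (wsEqs A' B' C' l' r')) :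
    (∀ (c : C') (φ : B' (l' c) → Q.QW) (ψ : B' (r' c) → Q.QW),
      Q.intro ⟨l' c, φ⟩ = Q.intro ⟨r' c, ψ⟩) ∧
    (∀ (T : Type u) (sup' : ∀ a : A', (B' a → T) → T),
      (∀ (c : C') (φ : B' (l' c) → T) (ψ : B' (r' c) → T),
        sup' (l' c) φ = sup' (r' c) ψ) →
      ∃! h : Q.QW → T, ∀ (a : A') (f : B' a → Q.QW),
        h (Q.intro ⟨a, f⟩) = sup' a (fun x => h (f x))) := by
  refine ⟨(sat_wsEqs_iff Q.intro).1 Q.equate, fun T sup' hcell => ?_⟩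
  have hsat := (sat_wsEqs_iff (fun s : SPoly (wsSig A' B') T => sup' s.1 s.2)).2 hcell
  refine (existsUnique_congr fun h => ?_).1 (Q.existsUnique_hom T _ hsat)
  exact ⟨fun hh a f => hh ⟨a, f⟩, fun hh s => hh s.1 s.2⟩
end
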